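/- Let F be a finite family of integer intervals satisfying the facet conditions above. If (α,β) ∈ F and (α,β′) ∈ F with β < β′, and the open interval (β,β′) contains no leaf of the tree of F, then (α,β+j) ∈ F for every integer j with 0 < j < β′ − β. -/

import Mathlib

namespace ScrollComb

/-- Open intervals with integer endpoints, identified with pairs `(a, b)`, `a < b`. -/
abbrev Iv : Type := ℤ × ℤ

/-- `I` is contained in `J` as open real intervals. -/
def Sub (I J : Iv) : Prop := J.1 ≤ I.1 ∧ I.2 ≤ J.2

/-- The length of an interval. -/
def len (I : Iv) : ℤ := I.2 - I.1

/-- Two open intervals with integer endpoints are disjoint. -/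
def Disj (I J : Iv) : Prop := I.2 ≤ J.1 ∨ J.2 ≤ I.1

/-- `I` is a child of `J` in the Hasse diagram of `(F, ⊆)`:  `I ⊊ J` and nothing of `F`
lies strictly between them. -/
def IsChild (F : Finset Iv) (I J : Iv) : Prop :=
  I ∈ F ∧ J ∈ F ∧ Sub I J ∧ I ≠ J ∧
    ∀ K ∈ F, Sub I K → Sub K J → K = I ∨ K = J

/-- `I` is a leaf (a minimal element) of the family `F`. -/
def IsLeaf (F : Finset Iv) (I : Iv) : Prop :=
  I ∈ F ∧ ∀ K ∈ F, Sub K I → K = I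

/-- The prescribed leaves set `𝔏_α`: the unit intervals `(β, β+1)` for
`β ∈ {α, …, α+ℓ} ∪ {c-d+ℓ-1, …, c-1}`. -/
noncomputable def leavesSet (c d α ℓ : ℤ) : Finset Iv :=
  (Finset.Icc α (α + ℓ) ∪ Finset.Icc (c - d + ℓ - 1) (c - 1)).image fun β => (β, β + 1)

/-- The structural conditions on a facet family:  a non-crossing family of open integer
subintervals of `(1, c)` whose Hasse diagram under inclusion is a rooted binary tree with
root `(1, c)`, satisfying the length conditions on nodes with one child resp. two children. -/
structure IsTreeFam (c : ℤ) (F : Finset Iv) : Prop where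
  bounds : ∀ I ∈ F, 1 ≤ I.1 ∧ I.1 < I.2 ∧ I.2 ≤ c
  root_mem : ((1 : ℤ), c) ∈ F
  noncrossing : ∀ I ∈ F, ∀ J ∈ F, Disj I J ∨ Sub I J ∨ Sub J I
  binary : ∀ J ∈ F, {I | IsChild F I J}.ncard ≤ 2
  one_child : ∀ J ∈ F, ∀ I, IsChild F I J → (∀ I', IsChild F I' J → I' = I) →
    len J = len I + 1 ∧ (J.1 < I.1 → (J.1, J.1 + 1) ∉ F) ∧ (I.2 < J.2 → (I.2, I.2 + 1) ∉ F)
  two_children : ∀ J ∈ F, ∀ I₁ I₂, IsChild F I₁ J → IsChild F I₂ J → I₁ ≠ I₂ →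
    Disj I₁ I₂ ∧ len I₁ + len I₂ = len J

/-- A facet family with prescribed leaves data `(α, ℓ)`. -/
structure IsScrollFacetWith (c d α ℓ : ℤ) (F : Finset Iv) : Prop where
  tree : IsTreeFam c F
  α_lb : 1 ≤ α
  α_ub : α ≤ c - d - 2
  ℓ_lb : 2 ≤ ℓ
  ℓ_ub : ℓ ≤ d + 1
  leaves : ∀ I, IsLeaf F I ↔ I ∈ leavesSet c d α ℓ

/-- A facet of the initial complex of the fiber cone of a rational normal scroll. -/
def IsScrollFacet (c d : ℤ) (F : Finset Iv) : Prop :=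
  ∃ α ℓ, IsScrollFacetWith c d α ℓ F

theorem Sub.refl (I : Iv) : Sub I I := ⟨le_rfl, le_rfl⟩

theorem Sub.trans {I J K : Iv} (hIJ : Sub I J) (hJK : Sub J K) : Sub I K :=
  ⟨hJK.1.trans hIJ.1, hIJ.2.trans hJK.2⟩

theorem Sub.eq_of_len_le {I J : Iv} (h : Sub I J) (hlen : len J ≤ len I) : I = J := by
  obtain ⟨h1, h2⟩ := h
  unfold len at hlen
  ext <;> omega

theorem exists_isLeaf_sub {F : Finset Iv} {I : Iv} (hI : I ∈ F) : ∃ L, IsLeaf F L ∧ Sub L I := by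
  classical
  obtain ⟨L, hL, hmin⟩ :=
    (F.filter (Sub · I)).exists_min_image len ⟨I, Finset.mem_filter.2 ⟨hI, Sub.refl I⟩⟩
  obtain ⟨hLF, hLI⟩ := Finset.mem_filter.1 hL
  refine ⟨L, ⟨hLF, fun K hK hKL => ?_⟩, hLI⟩
  exact hKL.eq_of_len_le (hmin K (Finset.mem_filter.2 ⟨hK, hKL.trans hLI⟩))

/-- The parent of `I` is taken to be a shortest member of `F` strictly between `I` and `K`. -/
theorem exists_isChild_sub {F : Finset Iv} {I K : Iv} (hI : I ∈ F) (hK : K ∈ F)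
    (hIK : Sub I K) (hne : I ≠ K) : ∃ J, IsChild F I J ∧ Sub J K := by
  classical
  obtain ⟨J, hJ, hmin⟩ := (F.filter fun J => Sub I J ∧ I ≠ J ∧ Sub J K).exists_min_image len
    ⟨K, Finset.mem_filter.2 ⟨hK, hIK, hne, Sub.refl K⟩⟩
  obtain ⟨hJF, hIJ, hIJne, hJK⟩ := Finset.mem_filter.1 hJ
  refine ⟨J, ⟨hI, hJF, hIJ, hIJne, fun K' hK' hIK' hK'J => ?_⟩, hJK⟩
  by_cases hK'I : K' = I
  · exact .inl hK'I
  · exact .inr <| hK'J.eq_of_len_le <|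
      hmin K' (Finset.mem_filter.2 ⟨hK', hIK', Ne.symm hK'I, hK'J.trans hJK⟩)

namespace IsTreeFam

variable {c : ℤ} {F : Finset Iv}

theorem sibling_sub (hT : IsTreeFam c F) {I I₂ J : Iv} (hI : IsChild F I J)
    (hI₂ : IsChild F I₂ J) (hne : I ≠ I₂) (hfst : I.1 = J.1) : Sub I₂ (I.2, J.2) := by
  have hdisj := (hT.two_children J hI.2.1 I I₂ hI hI₂ hne).1
  have hI₂pos := (hT.bounds I₂ hI₂.1).2.1
  obtain ⟨hJI₂, hI₂J⟩ := hI₂.2.2.1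
  unfold Disj at hdisj
  exact ⟨by omega, hI₂J⟩

/-- The parent `J` of `(a, x)` below `(a, β')` starts at `a`; a second child of `J` would lie in
`(x, β')` and so contain a leaf, hence `J` has `(a, x)` as its only child and is `(a, x + 1)`. -/
theorem mem_succ_of_no_leaf (hT : IsTreeFam c F) {a x β' : ℤ} (h₁ : (a, x) ∈ F)
    (h₂ : (a, β') ∈ F) (hx : x < β') (hnoleaf : ∀ L : Iv, IsLeaf F L → ¬ Sub L (x, β')) :
    (a, x + 1) ∈ F := by
  obtain ⟨J, hchild, hJ⟩ := exists_isChild_sub h₁ h₂ ⟨le_rfl, hx.le⟩ (by simpa using hx.ne)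
  have hJ₁ : a = J.1 := le_antisymm hJ.1 hchild.2.2.1.1
  by_cases honly : ∀ I', IsChild F I' J → I' = (a, x)
  · have hlen := (hT.one_child J hchild.2.1 _ hchild honly).1
    unfold len at hlen
    have hJeq : J = (a, x + 1) := by ext <;> simp only <;> omega
    exact hJeq ▸ hchild.2.1
  · push Not at honly
    obtain ⟨I₂, hI₂, hne⟩ := honly
    obtain ⟨L, hL, hLI₂⟩ := exists_isLeaf_sub hI₂.1
    have hI₂sub : Sub I₂ (x, β') := (hT.sibling_sub hchild hI₂ hne.symm hJ₁).trans ⟨le_rfl, hJ.2⟩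
    exact (hnoleaf L hL (hLI₂.trans hI₂sub)).elim

end IsTreeFam

theorem mem_of_no_leaf_between_general (c d : ℤ) (F : Finset Iv) (hF : IsScrollFacet c d F)
    (a β β' : ℤ) (h₁ : (a, β) ∈ F) (h₂ : (a, β') ∈ F)
    (hnoleaf : ∀ L : Iv, IsLeaf F L → ¬ Sub L (β, β')) :
    ∀ j : ℤ, 0 < j → j < β' - β → (a, β + j) ∈ F := by
  obtain ⟨_, _, hW⟩ := hF
  suffices ∀ j : ℤ, 0 ≤ j → j < β' - β → (a, β + j) ∈ F from fun j hj => this j hj.le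
  intro j hj
  induction j, hj using Int.leInduction with
  | base => intro; simpa using h₁
  | succ n hn ih =>
    intro hlt
    have hmem := hW.tree.mem_succ_of_no_leaf (ih (by omega)) h₂ (by omega)
      fun L hL hLsub => hnoleaf L hL (hLsub.trans ⟨by simp only; omega, le_rfl⟩)
    rwa [add_assoc] at hmem

/-- If `(a,β) ∈ F` and `(a,β') ∈ F` with `β < β'` and the open interval
`(β,β')` contains no leaf of the tree of `F`, then `(a, β + j) ∈ F` for `0 < j < β' − β`. -/
theorem mem_of_no_leaf_between (c d : ℤ) (F : Finset Iv) (hF : IsScrollFacet c d F)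
    (a β β' : ℤ) (h₁ : (a, β) ∈ F) (h₂ : (a, β') ∈ F) (hββ' : β < β')
    (hnoleaf : ∀ L : Iv, IsLeaf F L → ¬ Sub L (β, β')) :
    ∀ j : ℤ, 0 < j → j < β' - β → (a, β + j) ∈ F :=
  mem_of_no_leaf_between_general c d F hF a β β' h₁ h₂ hnoleaf

end ScrollComb
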